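/- arXiv:1907.07088 — 2 statements merged into one kernel-verified Lean document; each statement's English description precedes it below -/
import Mathlib

section
/- Distinct parents in the same residue class 1 (mod 3) cannot share a child: if μ₁ > ν₁ are distinct even nonnegative integers and n < m are positive integers, then z_n + 4^n·μ₁ ≠ z_m + 4^m·ν₁. -/
/-!
Multiplying by 3 and adding 1 turns the `k`-th child `z_k + 4^k a` back into `4^k (3a + 1)`.
A common child of two parents would thus give `3μ₁ + 1 = 4^(m-n) (3ν₁ + 1)`, whose left side
is odd since `μ₁` is even, while the right side is even since `m > n`.
-/

theorem three_mul_child_add_one (k a : ℕ) :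
    3 * ((4 ^ k - 1) / 3 + 4 ^ k * a) + 1 = 4 ^ k * (3 * a + 1) := by
  have hdvd : 3 ∣ 4 ^ k - 1 := by simpa using Nat.sub_dvd_pow_sub_pow 4 1 k
  have hpos : 1 ≤ 4 ^ k := Nat.one_le_pow _ _ (by norm_num)
  rw [mul_add, Nat.mul_div_cancel' hdvd]
  zify [hpos]
  ring

theorem four_pow_mul_three_mul_add_one_ne {μ ν n m : ℕ} (hμ : Even μ) (hnm : n < m) :
    4 ^ n * (3 * μ + 1) ≠ 4 ^ m * (3 * ν + 1) := by
  intro h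
  obtain ⟨k, rfl⟩ := Nat.exists_eq_add_of_lt hnm
  rw [add_assoc, pow_add, mul_assoc] at h
  have hcancel : 3 * μ + 1 = 4 ^ (k + 1) * (3 * ν + 1) :=
    Nat.eq_of_mul_eq_mul_left (Nat.pow_pos (by norm_num)) h
  have hodd : Odd (3 * μ + 1) := (hμ.mul_left 3).add_one
  have heven : Even (4 ^ (k + 1) * (3 * ν + 1)) :=
    (Nat.even_pow.mpr ⟨by decide, k.succ_ne_zero⟩).mul_right _
  exact Nat.not_even_iff_odd.mpr hodd (hcancel ▸ heven)

theorem stmt_12_general (μ₁ ν₁ : ℕ) (hμ₁ : Even μ₁)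
    (n m : ℕ) (hnm : n < m) :
    (4 ^ n - 1) / 3 + 4 ^ n * μ₁ ≠ (4 ^ m - 1) / 3 + 4 ^ m * ν₁ := by
  intro h
  apply four_pow_mul_three_mul_add_one_ne (ν := ν₁) hμ₁ hnm
  rw [← three_mul_child_add_one, ← three_mul_child_add_one, h]

theorem stmt_12 (μ₁ ν₁ : ℕ) (hμ₁ : Even μ₁) (hν₁ : Even ν₁) (hlt : ν₁ < μ₁)
    (n m : ℕ) (hn : 0 < n) (hnm : n < m) :
    (4 ^ n - 1) / 3 + 4 ^ n * μ₁ ≠ (4 ^ m - 1) / 3 + 4 ^ m * ν₁ :=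
  stmt_12_general μ₁ ν₁ hμ₁ n m hnm
end

section
/- If u and w are odd positive integers, both ≢ 0 (mod 3), and for some positive integers n, m the n-th child of u equals the m-th child of w (children defined via the inverse Collatz map), then u = w and n = m. -/
/-!
Undoing the inverse Collatz step, `3 * child + 1 = 2 ^ e * u` with `e = 2n` or `2n - 1` according
to `u mod 3`. Equal children thus give `2 ^ e * u = 2 ^ f * w` with `u, w` odd, so the 2-adic
valuations give `e = f` and then `u = w`; with the same parent the exponent determines `n`.
-/

/-- The n-th child of an odd parent `u ≢ 0 (mod 3)` under the inverse Collatz map. -/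
def invCollatzChild (u n : ℕ) : ℕ :=
  if u % 3 = 1 then (2 ^ (2 * n) * u - 1) / 3 else (2 ^ (2 * n - 1) * u - 1) / 3

def invCollatzChildExponent (u n : ℕ) : ℕ :=
  if u % 3 = 1 then 2 * n else 2 * n - 1

lemma pow_mul_eq_pow_mul_of_not_dvd {p a b u w : ℕ} (hp : p.Prime) (hu : ¬p ∣ u) (hw : ¬p ∣ w)
    (h : p ^ a * u = p ^ b * w) : a = b ∧ u = w := by
  have : Fact p.Prime := ⟨hp⟩
  have hu0 : u ≠ 0 := by rintro rfl; exact hu (dvd_zero p)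
  have hw0 : w ≠ 0 := by rintro rfl; exact hw (dvd_zero p)
  have hab : a = b := by
    have := congrArg (padicValNat p) h
    rwa [padicValNat.mul (pow_ne_zero _ hp.ne_zero) hu0,
      padicValNat.mul (pow_ne_zero _ hp.ne_zero) hw0, padicValNat.prime_pow,
      padicValNat.prime_pow, padicValNat.eq_zero_of_not_dvd hu,
      padicValNat.eq_zero_of_not_dvd hw, add_zero, add_zero] at this
  subst hab
  exact ⟨rfl, Nat.eq_of_mul_eq_mul_left (pow_pos hp.pos a) h⟩

lemma two_pow_invCollatzChildExponent_mul_mod_three {u n : ℕ} (hu3 : u % 3 ≠ 0) (hn : 0 < n) :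
    2 ^ invCollatzChildExponent u n * u % 3 = 1 := by
  obtain ⟨k, rfl⟩ : ∃ k, n = k + 1 := ⟨n - 1, by omega⟩
  have hlt : u % 3 < 3 := Nat.mod_lt u (by norm_num)
  have hpow : 2 ^ (2 * k) % 3 = 1 := by rw [pow_mul, Nat.pow_mod]; simp
  unfold invCollatzChildExponent
  split_ifs with hres
  · rw [show 2 * (k + 1) = 2 * k + 2 by ring, pow_add, Nat.mul_mod, Nat.mul_mod (2 ^ (2 * k)),
      hpow, hres]
    rfl
  · rw [show 2 * (k + 1) - 1 = 2 * k + 1 by omega, pow_succ, Nat.mul_mod,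
      Nat.mul_mod (2 ^ (2 * k)), hpow, show u % 3 = 2 by omega]

lemma three_mul_invCollatzChild_add_one {u n : ℕ} (hu3 : u % 3 ≠ 0) (hn : 0 < n) :
    3 * invCollatzChild u n + 1 = 2 ^ invCollatzChildExponent u n * u := by
  have hmod := two_pow_invCollatzChildExponent_mul_mod_three hu3 hn
  have hchild : invCollatzChild u n = (2 ^ invCollatzChildExponent u n * u - 1) / 3 := by
    unfold invCollatzChild invCollatzChildExponent
    split_ifs <;> rfl
  omega

theorem stmt_13_general (u w : ℕ) (hu : Odd u) (hw : Odd w)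
    (hu3 : u % 3 ≠ 0) (hw3 : w % 3 ≠ 0) (n m : ℕ) (hn : 0 < n) (hm : 0 < m)
    (h : invCollatzChild u n = invCollatzChild w m) : u = w ∧ n = m := by
  have heq : 2 ^ invCollatzChildExponent u n * u = 2 ^ invCollatzChildExponent w m * w := by
    rw [← three_mul_invCollatzChild_add_one hu3 hn, ← three_mul_invCollatzChild_add_one hw3 hm, h]
  obtain ⟨hexp, rfl⟩ := pow_mul_eq_pow_mul_of_not_dvd Nat.prime_two
    hu.not_two_dvd_nat hw.not_two_dvd_nat heq
  refine ⟨rfl, ?_⟩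
  unfold invCollatzChildExponent at hexp
  split_ifs at hexp <;> omega

theorem stmt_13 (u w : ℕ) (hu : Odd u) (hw : Odd w) (hupos : 0 < u) (hwpos : 0 < w)
    (hu3 : u % 3 ≠ 0) (hw3 : w % 3 ≠ 0) (n m : ℕ) (hn : 0 < n) (hm : 0 < m)
    (h : invCollatzChild u n = invCollatzChild w m) : u = w ∧ n = m :=
  stmt_13_general u w hu hw hu3 hw3 n m hn hm h
end
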